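/- Define drift a(x) = (1/4)x[α(1-2j)(x·t̂) - (1 + α²/2)] + (1/4)t̂[α(1+2j) - (α²/2)(x·t̂)] and diffusion b(x) = (1/2)[I - x⊗x + α(t̂⊗x - (x·t̂)I)] for x ∈ ℝ³ with |x| = 1 and t̂ a unit vector. Then x·b(x)·b(x)ᵀ·x = 0 and (1/2)tr(b(x)b(x)ᵀ) + x·a(x) = 0; consequently the radial Ito increment δE[|x|^m] vanishes for every m. -/
import Mathlib


open Matrix

noncomputable section

/-- The Ito drift vector a(x) of Eq. (28a). -/
def driftA (α j : ℝ) (t x : Fin 3 → ℝ) : Fin 3 → ℝ := fun i =>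
  (1/4) * x i * (α * (1 - 2 * j) * (x ⬝ᵥ t) - (1 + α ^ 2 / 2)) +
    (1/4) * t i * (α * (1 + 2 * j) - (α ^ 2 / 2) * (x ⬝ᵥ t))

/-- The Ito diffusion matrix b(x) of Eq. (28b). -/
def diffB (α : ℝ) (t x : Fin 3 → ℝ) : Matrix (Fin 3) (Fin 3) ℝ :=
  (1/2 : ℝ) • ((1 : Matrix (Fin 3) (Fin 3) ℝ) - Matrix.vecMulVec x x +
    α • (Matrix.vecMulVec t x - (x ⬝ᵥ t) • (1 : Matrix (Fin 3) (Fin 3) ℝ)))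

/-- On the unit sphere: x·b bᵀ·x = 0 and ½ tr(b bᵀ) + x·a = 0; consequently the
radial Ito increment δE[|x|^m] ∝ (m(m-2)/2)(x·b bᵀ·x) + m(½tr(b bᵀ) + x·a)
vanishes for every m. -/
theorem stmt14 (α j : ℝ) (t x : Fin 3 → ℝ) (hx : x ⬝ᵥ x = 1) (ht : t ⬝ᵥ t = 1) :
    x ⬝ᵥ ((diffB α t x * (diffB α t x)ᵀ).mulVec x) = 0 ∧
    (1/2) * (diffB α t x * (diffB α t x)ᵀ).trace + x ⬝ᵥ driftA α j t x = 0 ∧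
    ∀ m : ℝ,
      (m * (m - 2) / 2) * (x ⬝ᵥ ((diffB α t x * (diffB α t x)ᵀ).mulVec x)) +
        m * ((1/2) * (diffB α t x * (diffB α t x)ᵀ).trace + x ⬝ᵥ driftA α j t x) = 0 := by
  simp only [dotProduct, Fin.sum_univ_three] at hx ht
  -- Key fact: bᵀ x = (1/2)(1 - |x|²) x = 0 on the unit sphere.
  have hv : (diffB α t x)ᵀ.mulVec x = 0 := by
    funext i
    fin_cases i <;>
    · simp [diffB, mulVec, dotProduct, transpose_apply, Matrix.smul_apply,
        Matrix.sub_apply, Matrix.add_apply, vecMulVec_apply, Matrix.one_apply,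
        smul_eq_mul, Fin.sum_univ_three]
      first
      | linear_combination (-(x 0)/2) * hx
      | linear_combination (-(x 1)/2) * hx
      | linear_combination (-(x 2)/2) * hx
  have h1 : x ⬝ᵥ ((diffB α t x * (diffB α t x)ᵀ).mulVec x) = 0 := by
    rw [← Matrix.mulVec_mulVec, hv, Matrix.mulVec_zero, dotProduct_zero]
  have h2 : (1/2) * (diffB α t x * (diffB α t x)ᵀ).trace + x ⬝ᵥ driftA α j t x = 0 := by
    simp [diffB, driftA, trace, diag, mul_apply, transpose_apply, dotProduct,
      Matrix.smul_apply, Matrix.sub_apply, Matrix.add_apply, vecMulVec_apply,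
      Matrix.one_apply, smul_eq_mul, Fin.sum_univ_three]
    set s := x 0 * x 0 + x 1 * x 1 + x 2 * x 2 with hs
    set c := x 0 * t 0 + x 1 * t 1 + x 2 * t 2 with hc
    linear_combination (((s + 1 + α^2 - 2)/8 + (α*c*(1-2*j) - 1 - α^2/2)/4)) * hx +
      (α^2 * s / 8) * ht
  exact ⟨h1, h2, fun m => by rw [h1, h2]; ring⟩

end
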